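/- arXiv:2511.04151 — 3 statements merged into one kernel-verified Lean document; each statement's English description precedes it below -/
import Mathlib

section
/- Let p ≥ 3 be prime, H a proper subgroup of ℤ_p^× ≅ Aut(ℤ_p), and T an inverse-closed generating set of ℤ_p fixed setwise by H but not by any strictly larger subgroup of ℤ_p^×. If Aut(Cay(ℤ_p, T)) is not 2-transitive on the vertex set, then Aut(Cay(ℤ_p, T)) ≅ R(ℤ_p) ⋊ H. -/
namespace BZaux
open Finset Submodule
open Finset Submodule

variable (p : ℕ) [Fact p.Prime]

/-- monomial function -/
def Fm (s : ℕ) : ZMod p → ZMod p := fun x => x ^ s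

/-- polynomials of degree ≤ j, as a space of functions -/
def Vp (j : ℕ) : Submodule (ZMod p) (ZMod p → ZMod p) :=
  Submodule.span (ZMod p) (Fm p '' {s | s ≤ j})

/-- convolution -/
def conv (h f : ZMod p → ZMod p) : ZMod p → ZMod p := fun c => ∑ a, h (c - a) * f a

variable {p}

lemma Fm_mem_Vp {s j : ℕ} (h : s ≤ j) : Fm p s ∈ Vp p j :=
  Submodule.subset_span ⟨s, h, rfl⟩

lemma Vp_mono {i j : ℕ} (h : i ≤ j) : Vp p i ≤ Vp p j :=
  Submodule.span_mono (Set.image_mono fun s hs => le_trans hs h)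

lemma hp2 : 2 ≤ p := (Fact.out : p.Prime).two_le

lemma sum_split (f : ZMod p → ZMod p) :
    ∑ x : ZMod p, f x = f 0 + ∑ u : (ZMod p)ˣ, f u := by
  classical
  rw [← Finset.sum_erase_add Finset.univ f (Finset.mem_univ (0 : ZMod p)), add_comm]
  congr 1
  refine Finset.sum_bij' (fun x hx => Units.mk0 x (Finset.ne_of_mem_erase hx))
    (fun (u : (ZMod p)ˣ) (_ : u ∈ univ) => (u : ZMod p)) ?_ ?_ ?_ ?_ ?_
  · intro a ha; exact Finset.mem_univ _
  · intro u _; exact Finset.mem_erase.2 ⟨Units.ne_zero u, Finset.mem_univ _⟩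
  · intro a ha; rfl
  · intro u _; exact Units.ext rfl
  · intro a ha; rfl

lemma sum_pow_eq (m : ℕ) :
    ∑ x : ZMod p, x ^ m = if m ≠ 0 ∧ (p - 1) ∣ m then (-1 : ZMod p) else 0 := by
  classical
  rcases eq_or_ne m 0 with hm | hm
  · subst hm
    simp only [pow_zero, Finset.sum_const, Finset.card_univ, ZMod.card, nsmul_eq_mul, mul_one]
    simp [ZMod.natCast_self]
  · rw [sum_split, zero_pow hm, zero_add]
    have h := FiniteField.sum_pow_units (ZMod p) m
    rw [ZMod.card] at h
    rw [h]
    by_cases hd : (p - 1) ∣ m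
    · simp [hd, hm]
    · simp [hd, hm]

/-- the only multiple of p-1 in the window -/
lemma eq_pm1_of_dvd {n : ℕ} (h1 : n ≠ 0) (h2 : n < 2 * (p - 1)) (hd : (p - 1) ∣ n) :
    n = p - 1 := by
  obtain ⟨k, rfl⟩ := hd
  rcases k with _ | _ | k
  · omega
  · omega
  · exfalso
    have : (p - 1) * 2 ≤ (p - 1) * (k + 1 + 1) := Nat.mul_le_mul_left _ (by omega)
    omega

lemma choose_ne_zero' {n k : ℕ} (hn : n < p) (hk : k ≤ n) :
    ((n.choose k : ℕ) : ZMod p) ≠ 0 := by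
  rw [Ne, ZMod.natCast_eq_zero_iff]
  intro hdvd
  have hfac : p ∣ n.factorial := by
    rw [← Nat.choose_mul_factorial_mul_factorial hk]
    exact dvd_mul_of_dvd_left (dvd_mul_of_dvd_left hdvd _) _
  have := (Nat.Prime.dvd_factorial (Fact.out : p.Prime)).1 hfac
  omega

lemma conv_add_right (h f g : ZMod p → ZMod p) :
    conv p h (f + g) = conv p h f + conv p h g := by
  funext c; simp [conv, mul_add, Finset.sum_add_distrib]

lemma conv_smul_right (h f : ZMod p → ZMod p) (c₀ : ZMod p) :
    conv p h (c₀ • f) = c₀ • conv p h f := by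
  funext c
  simp only [conv, Pi.smul_apply, smul_eq_mul, Finset.mul_sum]
  exact Finset.sum_congr rfl fun a _ => by ring

lemma conv_zero_right (h : ZMod p → ZMod p) : conv p h 0 = 0 := by
  funext c; simp [conv]

lemma conv_add_left (h g f : ZMod p → ZMod p) :
    conv p (h + g) f = conv p h f + conv p g f := by
  funext c; simp [conv, add_mul, Finset.sum_add_distrib]

lemma conv_smul_left (h f : ZMod p → ZMod p) (c₀ : ZMod p) :
    conv p (c₀ • h) f = c₀ • conv p h f := by
  funext c
  simp only [conv, Pi.smul_apply, smul_eq_mul, Finset.mul_sum]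
  exact Finset.sum_congr rfl fun a _ => by ring

lemma conv_Fm {s t : ℕ} (hs : s ≤ p - 2) (ht : t ≤ p - 1) :
    conv p (Fm p s) (Fm p t) =
      if p - 1 ≤ s + t then
        (-((-1 : ZMod p) ^ ((s + t - (p - 1)) + s)) * (s.choose (s + t - (p - 1)) : ℕ)) •
          Fm p (s + t - (p - 1))
      else 0 := by
  classical
  have h2 : 2 ≤ p := hp2
  have key : ∀ c : ZMod p, conv p (Fm p s) (Fm p t) c
      = ∑ m ∈ Finset.range (s + 1),
          ((-1 : ZMod p) ^ (m + s) * c ^ m * (s.choose m : ℕ)) *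
            ∑ a : ZMod p, a ^ (s - m + t) := by
    intro c
    show (∑ a : ZMod p, (c - a) ^ s * a ^ t) = _
    calc (∑ a : ZMod p, (c - a) ^ s * a ^ t)
        = ∑ a : ZMod p, ∑ m ∈ Finset.range (s + 1),
            ((-1 : ZMod p) ^ (m + s) * c ^ m * (s.choose m : ℕ)) * a ^ (s - m + t) := by
          refine Finset.sum_congr rfl fun a _ => ?_
          rw [sub_pow, Finset.sum_mul]
          refine Finset.sum_congr rfl fun m hm => ?_
          rw [pow_add]
          ring
      _ = _ := by
          rw [Finset.sum_comm]
          exact Finset.sum_congr rfl fun m _ => (Finset.mul_sum _ _ _).symm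
  by_cases hcase : p - 1 ≤ s + t
  · funext c
    rw [key c, if_pos hcase]
    set m₀ := s + t - (p - 1) with hm₀
    have hm₀s : m₀ ≤ s := by omega
    rw [Finset.sum_eq_single m₀]
    · have e : s - m₀ + t = p - 1 := by omega
      rw [e, sum_pow_eq, if_pos ⟨by omega, dvd_rfl⟩]
      simp only [Pi.smul_apply, smul_eq_mul, Fm]
      ring
    · intro m hm hne
      have hmr := Finset.mem_range.1 hm
      have hz : ∑ a : ZMod p, a ^ (s - m + t) = 0 := by
        rw [sum_pow_eq, if_neg]
        rintro ⟨hne0, hdvd⟩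
        have := eq_pm1_of_dvd hne0 (by omega) hdvd
        omega
      rw [hz, mul_zero]
    · intro habs
      exact absurd (Finset.mem_range.2 (by omega)) habs
  · funext c
    rw [key c, if_neg hcase]
    show _ = (0 : ZMod p → ZMod p) c
    rw [Pi.zero_apply]
    apply Finset.sum_eq_zero
    intro m hm
    have hmr := Finset.mem_range.1 hm
    have hz : ∑ a : ZMod p, a ^ (s - m + t) = 0 := by
      rw [sum_pow_eq, if_neg]
      rintro ⟨hne0, hdvd⟩
      have := eq_pm1_of_dvd hne0 (by omega) hdvd
      omega
    rw [hz, mul_zero]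


lemma top_le_span_Fm (p : ℕ) [Fact p.Prime] :
    ⊤ ≤ Submodule.span (ZMod p) (Set.range fun i : Fin p => Fm p (i : ℕ)) := by
  classical
  intro f _
  have h2 : 2 ≤ p := (Fact.out : p.Prime).two_le
  set S := Submodule.span (ZMod p) (Set.range fun i : Fin p => Fm p (i : ℕ)) with hS
  have hmono : ∀ m : ℕ, m < p → Fm p m ∈ S := fun m hm =>
    Submodule.subset_span ⟨⟨m, hm⟩, rfl⟩
  have hδ : ∀ a : ZMod p, (fun x : ZMod p => if x = a then (1 : ZMod p) else 0) ∈ S := by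
    intro a
    have hfun : (fun x : ZMod p => if x = a then (1 : ZMod p) else 0)
        = Fm p 0 - ∑ m ∈ Finset.range p,
            (((-1 : ZMod p) ^ (m + (p - 1)) * a ^ ((p - 1) - m) * ((p - 1).choose m : ℕ))) • Fm p m := by
      funext x
      have hx : (x - a) ^ (p - 1) = ∑ m ∈ Finset.range p,
          ((-1 : ZMod p) ^ (m + (p - 1)) * a ^ ((p - 1) - m) * ((p - 1).choose m : ℕ)) * x ^ m := by
        rw [sub_pow]
        have : p - 1 + 1 = p := by omega
        rw [this]
        exact Finset.sum_congr rfl fun m _ => by ring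
      simp only [Pi.sub_apply, Finset.sum_apply, Pi.smul_apply, smul_eq_mul, Fm, pow_zero]
      rw [show (∑ m ∈ Finset.range p,
          ((-1 : ZMod p) ^ (m + (p - 1)) * a ^ ((p - 1) - m) * ((p - 1).choose m : ℕ)) * x ^ m)
          = (x - a) ^ (p - 1) from hx.symm]
      by_cases hxa : x = a
      · subst hxa
        rw [if_pos rfl, sub_self, zero_pow (by omega : p - 1 ≠ 0), sub_zero]
      · rw [if_neg hxa, ZMod.pow_card_sub_one_eq_one (sub_ne_zero.2 hxa), sub_self]
    rw [hfun]
    exact sub_mem (hmono 0 (by omega)) (sum_mem fun m hm =>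
      Submodule.smul_mem _ _ (hmono m (Finset.mem_range.1 hm)))
  have hrepr : f = ∑ a : ZMod p, f a • (fun x : ZMod p => if x = a then (1 : ZMod p) else 0) := by
    funext x
    simp only [Finset.sum_apply, Pi.smul_apply, smul_eq_mul]
    rw [Finset.sum_eq_single x]
    · simp
    · intro a _ hne
      rw [if_neg (Ne.symm hne), mul_zero]
    · intro h; exact absurd (Finset.mem_univ x) h
  rw [hrepr]
  exact sum_mem fun a _ => Submodule.smul_mem _ _ (hδ a)

noncomputable def bFm (p : ℕ) [Fact p.Prime] : Module.Basis (Fin p) (ZMod p) (ZMod p → ZMod p) :=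
  basisOfTopLeSpanOfCardEqFinrank _ (top_le_span_Fm p)
    (by rw [Module.finrank_pi, ZMod.card, Fintype.card_fin])

lemma bFm_apply (p : ℕ) [Fact p.Prime] (i : Fin p) : bFm p i = Fm p (i : ℕ) := by
  rw [bFm, coe_basisOfTopLeSpanOfCardEqFinrank]

lemma mem_Vp_iff {j : ℕ} (hj : j ≤ p - 1) (f : ZMod p → ZMod p) :
    f ∈ Vp p j ↔ ∀ i : Fin p, j < (i : ℕ) → (bFm p).repr f i = 0 := by
  classical
  have h2 : 2 ≤ p := (Fact.out : p.Prime).two_le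
  have himg : Fm p '' {s | s ≤ j} = (bFm p) '' {i : Fin p | (i : ℕ) ≤ j} := by
    ext g
    constructor
    · rintro ⟨s, hs, rfl⟩
      have hs' : s ≤ j := hs
      exact ⟨⟨s, by omega⟩, hs', bFm_apply p ⟨s, by omega⟩⟩
    · rintro ⟨i, hi, rfl⟩
      exact ⟨(i : ℕ), hi, (bFm_apply p i).symm⟩
  rw [Vp, himg, Module.Basis.mem_span_image]
  constructor
  · intro hsupp i hij
    by_contra hne
    have := hsupp (Finsupp.mem_support_iff.2 hne)
    simp only [Set.mem_setOf_eq] at this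
    omega
  · intro h i hi
    simp only [Set.mem_setOf_eq]
    by_contra hgt
    exact (Finsupp.mem_support_iff.1 hi) (h i (by omega))

lemma Vp_top' (p : ℕ) [Fact p.Prime] (f : ZMod p → ZMod p) : f ∈ Vp p (p - 1) := by
  have h2 : 2 ≤ p := (Fact.out : p.Prime).two_le
  refine Submodule.span_mono ?_ (top_le_span_Fm p (Submodule.mem_top))
  rintro _ ⟨i, rfl⟩
  have := i.isLt
  refine ⟨(i : ℕ), ?_, rfl⟩
  simp only [Set.mem_setOf_eq]
  omega

lemma pairing_repr (f : ZMod p → ZMod p) {t : ℕ} (ht : t ≤ p - 2) :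
    ∑ x : ZMod p, f x * x ^ t = - (bFm p).repr f ⟨p - 1 - t, by have h2 : 2 ≤ p := (Fact.out : p.Prime).two_le; omega⟩ := by
  classical
  have h2 : 2 ≤ p := (Fact.out : p.Prime).two_le
  have hf' : f = ∑ i : Fin p, (bFm p).repr f i • Fm p (i : ℕ) := by
    conv_lhs => rw [← Module.Basis.sum_repr (bFm p) f]
    exact Finset.sum_congr rfl fun i _ => by rw [bFm_apply]
  have step1 : ∑ x : ZMod p, f x * x ^ t
      = ∑ i : Fin p, (bFm p).repr f i * ∑ x : ZMod p, x ^ ((i : ℕ) + t) := by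
    conv_lhs => rw [hf']
    rw [show (∑ x : ZMod p, (∑ i : Fin p, (bFm p).repr f i • Fm p (i : ℕ)) x * x ^ t)
        = ∑ x : ZMod p, ∑ i : Fin p, (bFm p).repr f i * x ^ ((i : ℕ) + t) from
      Finset.sum_congr rfl fun x _ => by
        rw [Finset.sum_apply, Finset.sum_mul]
        exact Finset.sum_congr rfl fun i _ => by
          simp only [Pi.smul_apply, smul_eq_mul, Fm, pow_add]; ring]
    rw [Finset.sum_comm]
    exact Finset.sum_congr rfl fun i _ => (Finset.mul_sum _ _ _).symm
  rw [step1, Finset.sum_eq_single (⟨p - 1 - t, by omega⟩ : Fin p)]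
  · have e : (((⟨p - 1 - t, by omega⟩ : Fin p) : ℕ)) + t = p - 1 := by
      simp only []
      omega
    rw [e, sum_pow_eq, if_pos ⟨by omega, dvd_rfl⟩, mul_neg_one]
  · intro i _ hne
    have hilt := i.isLt
    have hz : ∑ x : ZMod p, x ^ ((i : ℕ) + t) = 0 := by
      rw [sum_pow_eq, if_neg]
      rintro ⟨hne0, hdvd⟩
      have he := eq_pm1_of_dvd hne0 (by omega) hdvd
      have : (i : ℕ) = p - 1 - t := by omega
      exact hne (Fin.ext (show (i:ℕ) = p - 1 - t from this))
    rw [hz, mul_zero]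
  · intro habs; exact absurd (Finset.mem_univ _) habs

lemma mem_Vp_of_sum (hp3 : 3 ≤ p) (f : ZMod p → ZMod p) (hf : ∑ x : ZMod p, f x = 0) :
    f ∈ Vp p (p - 2) := by
  rw [mem_Vp_iff (by omega)]
  intro i hi
  have hilt := i.isLt
  have hi' : (i : ℕ) = p - 1 := by omega
  have h0 := pairing_repr f (t := 0) (by omega)
  simp only [pow_zero, mul_one] at h0
  rw [hf] at h0
  have h0' : (bFm p).repr f (⟨p - 1 - 0, by omega⟩ : Fin p) = 0 := by
    rw [← neg_eq_zero]
    exact h0.symm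
  have he : i = (⟨p - 1 - 0, by omega⟩ : Fin p) := Fin.ext (show (i:ℕ) = p - 1 - 0 by omega)
  rw [he]
  exact h0'

lemma mul_mem_Vp {a b : ℕ} {f g : ZMod p → ZMod p}
    (hf : f ∈ Vp p a) (hg : g ∈ Vp p b) : f * g ∈ Vp p (a + b) := by
  induction hf using Submodule.span_induction with
  | mem x hx =>
    obtain ⟨s, hs, rfl⟩ := hx
    have hs' : s ≤ a := hs
    induction hg using Submodule.span_induction with
    | mem y hy =>
      obtain ⟨t, hht, rfl⟩ := hy
      have ht' : t ≤ b := hht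
      have : Fm p s * Fm p t = Fm p (s + t) := by
        funext x; simp [Fm, pow_add]
      rw [this]
      exact Fm_mem_Vp (by omega)
    | zero => rw [mul_zero]; exact zero_mem _
    | add y z _ _ hy hz => rw [mul_add]; exact add_mem hy hz
    | smul c y _ hy => rw [mul_smul_comm]; exact Submodule.smul_mem _ _ hy
  | zero => rw [zero_mul]; exact zero_mem _
  | add x y _ _ hx hy => rw [add_mul]; exact add_mem hx hy
  | smul c x _ hx => rw [smul_mul_assoc]; exact Submodule.smul_mem _ _ hx

lemma exists_decomp {w : ℕ} (hw1 : 1 ≤ w) (hw : w ≤ p - 1) {h : ZMod p → ZMod p}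
    (hh : h ∈ Vp p w) (hh' : h ∉ Vp p (w - 1)) :
    ∃ c : ZMod p, c ≠ 0 ∧ h - c • Fm p w ∈ Vp p (w - 1) := by
  classical
  have h2 : 2 ≤ p := (Fact.out : p.Prime).two_le
  set iw : Fin p := ⟨w, by omega⟩ with hiw
  refine ⟨(bFm p).repr h iw, ?_, ?_⟩
  · intro hc0
    apply hh'
    rw [mem_Vp_iff (by omega)]
    intro i hi
    rcases eq_or_ne i iw with rfl | hne
    · exact hc0
    · refine (mem_Vp_iff (by omega) h).1 hh i ?_
      have : (i : ℕ) ≠ w := fun hc => hne (Fin.ext (by simp [hiw, hc]))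
      omega
  · rw [mem_Vp_iff (by omega)]
    intro i hi
    have hrw : (bFm p).repr (Fm p w) = Finsupp.single iw 1 := by
      have : Fm p w = bFm p iw := (bFm_apply p iw).symm
      rw [this, Module.Basis.repr_self]
    rw [map_sub, map_smul, hrw]
    simp only [Finsupp.coe_sub, Pi.sub_apply, Finsupp.coe_smul, Pi.smul_apply,
      Finsupp.single_apply, smul_eq_mul]
    rcases eq_or_ne iw i with rfl | hne
    · rw [if_pos rfl, mul_one, sub_self]
    · rw [if_neg hne, mul_zero, sub_zero]
      refine (mem_Vp_iff (by omega) h).1 hh i ?_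
      have : (i : ℕ) ≠ w := fun hc => hne (Fin.ext (by simp [hiw, hc]))
      omega

lemma Fm_notMem_Vp {m : ℕ} (hm : m ≤ p - 1) (h1 : 1 ≤ m) : Fm p m ∉ Vp p (m - 1) := by
  have h2 : 2 ≤ p := (Fact.out : p.Prime).two_le
  intro hmem
  rw [mem_Vp_iff (by omega)] at hmem
  have := hmem ⟨m, by omega⟩ (by simp; omega)
  rw [show Fm p m = bFm p ⟨m, by omega⟩ from (bFm_apply p ⟨m, by omega⟩).symm,
    Module.Basis.repr_self] at this
  simp at this

lemma mul_notMem {aw bw : ℕ} (ha1 : 1 ≤ aw) (hb1 : 1 ≤ bw) (hab : aw + bw ≤ p - 1)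
    {f g : ZMod p → ZMod p}
    (hf : f ∈ Vp p aw) (hf' : f ∉ Vp p (aw - 1)) (hg : g ∈ Vp p bw) (hg' : g ∉ Vp p (bw - 1)) :
    f * g ∉ Vp p (aw + bw - 1) := by
  have h2 : 2 ≤ p := (Fact.out : p.Prime).two_le
  obtain ⟨c, hc, hr⟩ := exists_decomp ha1 (by omega) hf hf'
  obtain ⟨c', hc', hr'⟩ := exists_decomp hb1 (by omega) hg hg'
  intro hmem
  set r := f - c • Fm p aw with hrd
  set r' := g - c' • Fm p bw with hrd'
  have hfg : f * g = (c * c') • Fm p (aw + bw) + ((c • Fm p aw) * r' + r * g) := by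
    have h1 : f = r + c • Fm p aw := by rw [hrd]; ring
    have h1' : g = r' + c' • Fm p bw := by rw [hrd']; ring
    have hFm : Fm p aw * Fm p bw = Fm p (aw + bw) := by
      funext x; simp [Fm, pow_add]
    calc f * g = (r + c • Fm p aw) * g := by rw [← h1]
      _ = r * g + (c • Fm p aw) * (r' + c' • Fm p bw) := by rw [add_mul, ← h1']
      _ = r * g + (c • Fm p aw) * r' + (c * c') • (Fm p aw * Fm p bw) := by
          rw [mul_add]
          rw [smul_mul_assoc, smul_mul_assoc, mul_smul_comm, smul_smul]
          ring_nf
      _ = (c * c') • Fm p (aw + bw) + ((c • Fm p aw) * r' + r * g) := by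
          rw [hFm]; abel
  have hE : (c • Fm p aw) * r' + r * g ∈ Vp p (aw + bw - 1) := by
    refine add_mem ?_ ?_
    · have := mul_mem_Vp (Submodule.smul_mem _ c (Fm_mem_Vp (le_refl aw))) hr'
      exact Vp_mono (by omega) this
    · have := mul_mem_Vp hr hg
      exact Vp_mono (by omega) this
  have hFmmem : (c * c') • Fm p (aw + bw) ∈ Vp p (aw + bw - 1) := by
    have hsub := sub_mem hmem hE
    rw [hfg, add_sub_cancel_right] at hsub
    exact hsub
  have hne : c * c' ≠ 0 := mul_ne_zero hc hc'
  have : Fm p (aw + bw) ∈ Vp p (aw + bw - 1) := by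
    have := Submodule.smul_mem _ (c * c')⁻¹ hFmmem
    rwa [smul_smul, inv_mul_cancel₀ hne, one_smul] at this
  exact Fm_notMem_Vp (by omega) (by omega) this


lemma conv_eq_zero {a b : ℕ} (ha : a ≤ p - 2) (hb : b ≤ p - 1) (hab : a + b < p - 1)
    {h f : ZMod p → ZMod p} (hh : h ∈ Vp p a) (hf : f ∈ Vp p b) : conv p h f = 0 := by
  induction hh using Submodule.span_induction with
  | mem x hx =>
    obtain ⟨s, hs, rfl⟩ := hx
    have hs' : s ≤ a := hs
    induction hf using Submodule.span_induction with
    | mem y hy =>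
      obtain ⟨t, hht, rfl⟩ := hy
      have ht' : t ≤ b := hht
      rw [conv_Fm (by omega) (by omega), if_neg (by omega)]
    | zero => rw [conv_zero_right]
    | add y z _ _ hy hz => rw [conv_add_right, hy, hz, add_zero]
    | smul c y _ hy => rw [conv_smul_right, hy, smul_zero]
  | zero =>
    funext c; simp [conv]
  | add x y _ _ hx hy => rw [conv_add_left, hx, hy, add_zero]
  | smul c x _ hx => rw [conv_smul_left, hx, smul_zero]

lemma conv_mem_Vp {a b : ℕ} (ha : a ≤ p - 2) (hb : b ≤ p - 1)
    {h f : ZMod p → ZMod p} (hh : h ∈ Vp p a) (hf : f ∈ Vp p b) :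
    conv p h f ∈ Vp p (a + b - (p - 1)) := by
  induction hh using Submodule.span_induction with
  | mem x hx =>
    obtain ⟨s, hs, rfl⟩ := hx
    have hs' : s ≤ a := hs
    induction hf using Submodule.span_induction with
    | mem y hy =>
      obtain ⟨t, hht, rfl⟩ := hy
      have ht' : t ≤ b := hht
      rw [conv_Fm (by omega) (by omega)]
      by_cases hc : p - 1 ≤ s + t
      · rw [if_pos hc]
        exact Submodule.smul_mem _ _ (Fm_mem_Vp (by omega))
      · rw [if_neg hc]
        exact zero_mem _
    | zero => rw [conv_zero_right]; exact zero_mem _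
    | add y z _ _ hy hz => rw [conv_add_right]; exact add_mem hy hz
    | smul c y _ hy => rw [conv_smul_right]; exact Submodule.smul_mem _ _ hy
  | zero =>
    have : conv p 0 f = 0 := by funext c; simp [conv]
    rw [this]; exact zero_mem _
  | add x y _ _ hx hy => rw [conv_add_left]; exact add_mem hx hy
  | smul c x _ hx => rw [conv_smul_left]; exact Submodule.smul_mem _ _ hx

lemma pairing_zero {a b : ℕ} (hab : a + b ≤ p - 2)
    {f h : ZMod p → ZMod p} (hf : f ∈ Vp p a) (hh : h ∈ Vp p b) :
    ∑ x : ZMod p, f x * h x = 0 := by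
  induction hf using Submodule.span_induction with
  | mem x hx =>
    obtain ⟨s, hs, rfl⟩ := hx
    have hs' : s ≤ a := hs
    induction hh using Submodule.span_induction with
    | mem y hy =>
      obtain ⟨t, hht, rfl⟩ := hy
      have ht' : t ≤ b := hht
      have : ∀ x : ZMod p, Fm p s x * Fm p t x = x ^ (s + t) := by
        intro x; simp [Fm, pow_add]
      rw [Finset.sum_congr rfl fun x _ => this x, sum_pow_eq, if_neg]
      rintro ⟨hne0, hdvd⟩
      have := eq_pm1_of_dvd hne0 (by omega) hdvd
      omega
    | zero => simp
    | add y z _ _ hy hz =>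
      simp only [Pi.add_apply, mul_add, Finset.sum_add_distrib, hy, hz, add_zero]
    | smul c y _ hy =>
      simp only [Pi.smul_apply, smul_eq_mul]
      rw [show (∑ x : ZMod p, Fm p s x * (c * y x)) = c * ∑ x : ZMod p, Fm p s x * y x by
        rw [Finset.mul_sum]; exact Finset.sum_congr rfl fun x _ => by ring, hy, mul_zero]
  | zero => simp
  | add x y _ _ hx hy =>
    simp only [Pi.add_apply, add_mul, Finset.sum_add_distrib, hx, hy, add_zero]
  | smul c x _ hx =>
    simp only [Pi.smul_apply, smul_eq_mul]
    rw [show (∑ x' : ZMod p, c * x x' * h x') = c * ∑ x' : ZMod p, x x' * h x' by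
      rw [Finset.mul_sum]; exact Finset.sum_congr rfl fun x' _ => by ring, hx, mul_zero]

section Grp

variable (G : Subgroup (Equiv.Perm (ZMod p)))

def Minv : Set (ZMod p → ZMod p) :=
  {h | ∀ g : Equiv.Perm (ZMod p), g ∈ G → g 0 = 0 → ∀ x, h (g x) = h x}

def InvJ (j : ℕ) : Prop :=
  ∀ g : Equiv.Perm (ZMod p), g ∈ G → ∀ f ∈ Vp p j, (f ∘ g) ∈ Vp p j

variable {G}

lemma orbital (hτ : ∀ a : ZMod p, Equiv.addLeft a ∈ G)
    {g : Equiv.Perm (ZMod p)} (hg : g ∈ G) (x y : ZMod p) :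
    ∃ σ : Equiv.Perm (ZMod p), σ ∈ G ∧ σ 0 = 0 ∧ σ (x - y) = g x - g y := by
  refine ⟨Equiv.addLeft (-(g y)) * g * Equiv.addLeft y,
    mul_mem (mul_mem (hτ _) hg) (hτ _), ?_, ?_⟩
  · simp [Equiv.Perm.mul_apply, Equiv.coe_addLeft]
  · simp only [Equiv.Perm.mul_apply, Equiv.coe_addLeft]
    rw [add_sub_cancel]
    rw [neg_add_eq_sub]

lemma conv_comp {h : ZMod p → ZMod p} (hh : h ∈ Minv G)
    (hτ : ∀ a : ZMod p, Equiv.addLeft a ∈ G)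
    {g : Equiv.Perm (ZMod p)} (hg : g ∈ G) (f : ZMod p → ZMod p) :
    (conv p h f) ∘ g = conv p h (f ∘ g) := by
  funext x
  show ∑ a, h (g x - a) * f a = ∑ b, h (x - b) * f (g b)
  rw [← Equiv.sum_comp g (fun a => h (g x - a) * f a)]
  refine Finset.sum_congr rfl fun b _ => ?_
  obtain ⟨σ, hσG, hσ0, hσ⟩ := orbital hτ hg x b
  rw [← hσ, hh σ hσG hσ0 (x - b)]

lemma InvJ_top : InvJ G (p - 1) := fun g _ f _ => Vp_top' p _

lemma InvJ_zero : InvJ G 0 := by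
  intro g _ f hf
  have h0 : Fm p '' {s | s ≤ 0} = {Fm p 0} := by
    ext y; constructor
    · rintro ⟨s, hs, rfl⟩
      have : s = 0 := Nat.le_zero.1 hs
      subst this; rfl
    · rintro rfl; exact ⟨0, le_refl 0, rfl⟩
  rw [Vp, h0, Submodule.mem_span_singleton] at hf ⊢
  obtain ⟨c, rfl⟩ := hf
  refine ⟨c, ?_⟩
  funext x
  simp [Fm]

lemma InvJ_mulclosed {a b : ℕ} (hia : InvJ G a) (hib : InvJ G b) : InvJ G (a + b) := by
  intro g hg f hf
  induction hf using Submodule.span_induction with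
  | mem x hx =>
    obtain ⟨m, hm, rfl⟩ := hx
    have hm' : m ≤ a + b := hm
    have hsplit : Fm p m ∘ g = (Fm p (min m a) ∘ g) * (Fm p (m - min m a) ∘ g) := by
      funext x
      simp only [Function.comp_apply, Pi.mul_apply, Fm, ← pow_add]
      congr 1
      omega
    rw [hsplit]
    have h1 := hia g hg (Fm p (min m a)) (Fm_mem_Vp (min_le_right _ _))
    have h2 := hib g hg (Fm p (m - min m a)) (Fm_mem_Vp (by omega))
    exact mul_mem_Vp h1 h2
  | zero =>
    have : (0 : ZMod p → ZMod p) ∘ g = 0 := rfl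
    rw [this]; exact zero_mem _
  | add x y _ _ hx hy =>
    have : (x + y) ∘ g = x ∘ g + y ∘ g := rfl
    rw [this]; exact add_mem hx hy
  | smul c x _ hx =>
    have : (c • x) ∘ g = c • (x ∘ g) := rfl
    rw [this]; exact Submodule.smul_mem _ _ hx

lemma InvJ_perp {j : ℕ} (hj : j ≤ p - 2) (hinv : InvJ G j) : InvJ G (p - 2 - j) := by
  have h2 : 2 ≤ p := hp2
  have hchar : ∀ f : ZMod p → ZMod p,
      f ∈ Vp p (p - 2 - j) ↔ ∀ h ∈ Vp p j, ∑ x : ZMod p, f x * h x = 0 := by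
    intro f
    constructor
    · intro hf h hh
      exact pairing_zero (by omega) hf hh
    · intro hperp
      rw [mem_Vp_iff (by omega)]
      intro i hi
      have hilt := i.isLt
      have hip : (i : ℕ) ≤ p - 1 := by omega
      have htj : p - 1 - (i : ℕ) ≤ j := by omega
      have h0 := hperp (Fm p (p - 1 - (i : ℕ))) (Fm_mem_Vp htj)
      have hrepr := pairing_repr f (t := p - 1 - (i : ℕ)) (by omega)
      simp only [Fm] at h0
      rw [hrepr] at h0
      have he : (⟨p - 1 - (p - 1 - (i : ℕ)), by omega⟩ : Fin p) = i :=
        Fin.ext (show p - 1 - (p - 1 - (i : ℕ)) = (i : ℕ) by omega)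
      rw [he] at h0
      rw [← neg_eq_zero]
      exact h0
  intro g hg f hf
  rw [hchar] at hf ⊢
  intro h hh
  have hg' : g⁻¹ ∈ G := inv_mem hg
  have hcomp := hinv g⁻¹ hg' h hh
  have : ∑ x : ZMod p, (f ∘ g) x * h x = ∑ y : ZMod p, f y * (h ∘ ⇑(g⁻¹)) y := by
    rw [← Equiv.sum_comp g (fun y => f y * (h ∘ ⇑(g⁻¹)) y)]
    refine Finset.sum_congr rfl fun x _ => ?_
    simp only [Function.comp_apply]
    rw [Equiv.Perm.coe_inv, Equiv.symm_apply_apply]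
  rw [this]
  exact hf _ hcomp

lemma InvJ_sub (hτ : ∀ a : ZMod p, Equiv.addLeft a ∈ G)
    {w d j : ℕ} (hw1 : 1 ≤ w) (hw2 : w ≤ p - 2) (hwd : w + d = p - 1)
    {h : ZMod p → ZMod p} (hhM : h ∈ Minv G) (hh : h ∈ Vp p w) (hh' : h ∉ Vp p (w - 1))
    (hd : d ≤ j) (hj : j ≤ p - 1) (hinv : InvJ G j) : InvJ G (j - d) := by
  classical
  have h2 : 2 ≤ p := hp2
  have hd1 : 1 ≤ d := by omega
  obtain ⟨c, hc, hr⟩ := exists_decomp hw1 (by omega) hh hh'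
  set r : ZMod p → ZMod p := h - c • Fm p w with hrd
  have hhr : h = c • Fm p w + r := by rw [hrd]; ring
  -- image submodule
  set ImS : Submodule (ZMod p) (ZMod p → ZMod p) :=
    { carrier := {f' | ∃ f, f ∈ Vp p j ∧ conv p h f = f'}
      add_mem' := by
        rintro _ _ ⟨f₁, hf₁, rfl⟩ ⟨f₂, hf₂, rfl⟩
        exact ⟨f₁ + f₂, add_mem hf₁ hf₂, conv_add_right h f₁ f₂⟩
      zero_mem' := ⟨0, zero_mem _, conv_zero_right h⟩
      smul_mem' := by
        rintro c₀ _ ⟨f₁, hf₁, rfl⟩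
        exact ⟨c₀ • f₁, Submodule.smul_mem _ _ hf₁, conv_smul_right h f₁ c₀⟩ } with hImS
  have himg : ∀ m : ℕ, m ≤ j - d → Fm p m ∈ ImS := by
    intro m
    induction m using Nat.strong_induction_on with
    | _ m IH =>
      intro hm
      have hmw : m ≤ w := by omega
      have hmd : m + d ≤ j := by omega
      -- leading coefficient
      obtain ⟨γ, hγ0, hγ⟩ : ∃ γ : ZMod p, γ ≠ 0 ∧
          conv p (Fm p w) (Fm p (m + d)) = γ • Fm p m := by
        have e1 : w + (m + d) - (p - 1) = m := by omega
        refine ⟨-((-1 : ZMod p) ^ (m + w)) * ((w.choose m : ℕ) : ZMod p),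
          mul_ne_zero (neg_ne_zero.2 (pow_ne_zero _ (neg_ne_zero.2 one_ne_zero)))
            (choose_ne_zero' (by omega) hmw), ?_⟩
        rw [conv_Fm (by omega) (by omega), if_pos (by omega), e1]
      have hsplit : conv p h (Fm p (m + d)) =
          c • (γ • Fm p m) + conv p r (Fm p (m + d)) := by
        conv_lhs => rw [hhr]
        rw [conv_add_left, conv_smul_left, hγ]
      rcases Nat.eq_zero_or_pos m with rfl | hmpos
      · -- m = 0 : remainder convolution vanishes
        have hz : conv p r (Fm p (0 + d)) = 0 := by
          refine conv_eq_zero (a := w - 1) (b := d) (by omega) (by omega) (by omega) hr ?_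
          exact Fm_mem_Vp (by omega)
        have : Fm p 0 = (c * γ)⁻¹ • conv p h (Fm p (0 + d)) := by
          rw [hsplit, hz, add_zero, smul_smul c γ, smul_smul, inv_mul_cancel₀
            (mul_ne_zero hc hγ0), one_smul]
        rw [this]
        exact Submodule.smul_mem _ _ ⟨Fm p (0 + d), Fm_mem_Vp (by omega), rfl⟩
      · -- m ≥ 1
        have hrlow : conv p r (Fm p (m + d)) ∈ Vp p (m - 1) := by
          have := conv_mem_Vp (a := w - 1) (b := m + d) (by omega) (by omega) hr
            (Fm_mem_Vp (le_refl _))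
          have e : w - 1 + (m + d) - (p - 1) = m - 1 := by omega
          rwa [e] at this
        have hlow_im : Vp p (m - 1) ≤ ImS := by
          rw [Vp]
          refine Submodule.span_le.2 ?_
          rintro _ ⟨m', hm', rfl⟩
          have hm'' : m' ≤ m - 1 := hm'
          exact IH m' (by omega) (by omega)
        have hmain : conv p h (Fm p (m + d)) ∈ ImS :=
          ⟨Fm p (m + d), Fm_mem_Vp (by omega), rfl⟩
        have : Fm p m = (c * γ)⁻¹ • (conv p h (Fm p (m + d)) - conv p r (Fm p (m + d))) := by
          rw [hsplit, add_sub_cancel_right, smul_smul c γ, smul_smul, inv_mul_cancel₀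
            (mul_ne_zero hc hγ0), one_smul]
        rw [this]
        exact Submodule.smul_mem _ _ (sub_mem hmain (hlow_im hrlow))
  have hsurj : Vp p (j - d) ≤ ImS := by
    rw [Vp]
    refine Submodule.span_le.2 ?_
    rintro _ ⟨m, hm, rfl⟩
    exact himg m hm
  intro g hg f' hf'
  obtain ⟨f, hfj, rfl⟩ := hsurj hf'
  rw [conv_comp hhM hτ hg f]
  have hfg : f ∘ g ∈ Vp p j := hinv g hg f hfj
  have := conv_mem_Vp (a := w) (b := j) (by omega) (by omega) hh hfg
  have e : w + j - (p - 1) = j - d := by omega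
  rwa [e] at this

end Grp

section Descent

variable {G : Subgroup (Equiv.Perm (ZMod p))}

lemma Minv_mul {h₁ h₂ : ZMod p → ZMod p} (h1 : h₁ ∈ Minv G) (h2 : h₂ ∈ Minv G) :
    h₁ * h₂ ∈ Minv G := by
  intro g hg hg0 x
  simp only [Pi.mul_apply, h1 g hg hg0 x, h2 g hg hg0 x]

lemma InvJ_one (hp3 : 3 ≤ p) (hτ : ∀ a : ZMod p, Equiv.addLeft a ∈ G)
    (hnt : ∃ b : ZMod p, b ≠ 0 ∧ ∀ g ∈ G, g 0 = 0 → g 1 ≠ b) :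
    InvJ G 1 := by
  classical
  obtain ⟨b₀, hb0, hb⟩ := hnt
  -- the G₀-orbit of 1
  set O : Set (ZMod p) := {x | ∃ g ∈ G, g 0 = 0 ∧ g 1 = x} with hO
  set N : ℕ := (Finset.univ.filter (fun x : ZMod p => x ∈ O)).card with hN
  set h₀ : ZMod p → ZMod p :=
    fun x => (if x ∈ O then (1 : ZMod p) else 0) - (N : ZMod p) * (if x = 0 then 1 else 0)
    with hh₀
  have h₀M : h₀ ∈ Minv G := by
    intro g hg hg0 x
    have hOx : g x ∈ O ↔ x ∈ O := by
      constructor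
      · rintro ⟨g', hg', h0', h1'⟩
        have hginv0 : g⁻¹ 0 = 0 := by
          have : g (g⁻¹ 0) = g 0 := by rw [Equiv.Perm.coe_inv, Equiv.apply_symm_apply, hg0]
          exact g.injective this
        refine ⟨g⁻¹ * g', mul_mem (inv_mem hg) hg', ?_, ?_⟩
        · rw [Equiv.Perm.mul_apply, h0']; exact hginv0
        · rw [Equiv.Perm.mul_apply, h1', Equiv.Perm.coe_inv, Equiv.symm_apply_apply]
      · rintro ⟨g', hg', h0', h1'⟩
        refine ⟨g * g', mul_mem hg hg', ?_, ?_⟩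
        · rw [Equiv.Perm.mul_apply, h0', hg0]
        · rw [Equiv.Perm.mul_apply, h1']
    have hzero : g x = 0 ↔ x = 0 :=
      ⟨fun h => g.injective (h.trans hg0.symm), fun h => by rw [h, hg0]⟩
    simp only [hh₀]
    rw [if_congr hOx rfl rfl, if_congr hzero rfl rfl]
  have h1O : (1 : ZMod p) ∈ O := ⟨1, one_mem G, rfl, rfl⟩
  have hb₀O : b₀ ∉ O := by
    rintro ⟨g, hgG, h0', h1'⟩
    exact hb g hgG h0' h1'
  have hone : (1 : ZMod p) ≠ 0 := one_ne_zero
  have hsum : ∑ x : ZMod p, h₀ x = 0 := by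
    simp only [hh₀, Finset.sum_sub_distrib]
    have e1 : ∑ x : ZMod p, (if x ∈ O then (1 : ZMod p) else 0) = (N : ZMod p) := by
      rw [Finset.sum_boole, hN]
    have e2 : ∑ x : ZMod p, (N : ZMod p) * (if x = 0 then 1 else 0) = (N : ZMod p) := by
      rw [← Finset.mul_sum]
      rw [Finset.sum_ite_eq' Finset.univ (0 : ZMod p) (fun _ => (1 : ZMod p))]
      simp
    rw [e1, e2, sub_self]
  have h₀Vp : h₀ ∈ Vp p (p - 2) := mem_Vp_of_sum hp3 h₀ hsum
  have h₀val1 : h₀ 1 = 1 := by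
    simp only [hh₀]
    rw [if_pos h1O, if_neg hone, mul_zero, sub_zero]
  have h₀valb : h₀ b₀ = 0 := by
    simp only [hh₀]
    rw [if_neg hb₀O, if_neg hb0, mul_zero, sub_zero]
  have h₀not : h₀ ∉ Vp p 0 := by
    intro hmem
    have h0 : Fm p '' {s | s ≤ 0} = {Fm p 0} := by
      ext y; constructor
      · rintro ⟨s, hs, rfl⟩
        have : s = 0 := Nat.le_zero.1 hs
        subst this; rfl
      · rintro rfl; exact ⟨0, le_refl 0, rfl⟩
    rw [Vp, h0, Submodule.mem_span_singleton] at hmem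
    obtain ⟨c, hc⟩ := hmem
    have e1 : c = h₀ 1 := by rw [← hc]; simp [Fm]
    have e2 : c = h₀ b₀ := by rw [← hc]; simp [Fm]
    rw [h₀val1] at e1
    rw [h₀valb] at e2
    exact hone (e1.symm.trans e2)
  -- the degree set
  set DS : Set ℕ := {w | 1 ≤ w ∧ w ≤ p - 2 ∧
    ∃ h, h ∈ Minv G ∧ h ∈ Vp p w ∧ h ∉ Vp p (w - 1)} with hDS
  have hw₀mem : sInf {j | h₀ ∈ Vp p j} ∈ DS := by
    set w₀ := sInf {j | h₀ ∈ Vp p j} with hw₀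
    have hne : h₀ ∈ Vp p w₀ := Nat.sInf_mem (s := {j | h₀ ∈ Vp p j}) ⟨p - 2, h₀Vp⟩
    have hle : w₀ ≤ p - 2 := Nat.sInf_le h₀Vp
    have h1le : 1 ≤ w₀ := by
      rcases Nat.eq_zero_or_pos w₀ with h | h
      · exact absurd (h ▸ hne) h₀not
      · exact h
    have hnot : h₀ ∉ Vp p (w₀ - 1) := fun hmem => by
      have := Nat.sInf_le (s := {j | h₀ ∈ Vp p j}) hmem
      omega
    exact ⟨h1le, hle, h₀, h₀M, hne, hnot⟩
  set w : ℕ := sSup DS with hwdef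
  have hwDS : w ∈ DS := Nat.sSup_mem ⟨_, hw₀mem⟩ ⟨p - 2, fun x hx => hx.2.1⟩
  obtain ⟨hw1, hw2, h, hhM, hh, hh'⟩ := hwDS
  have hbdd : BddAbove DS := ⟨p - 2, fun x hx => hx.2.1⟩
  -- maximality of the degree w : 2w ≥ p-1
  have h2w : p - 1 ≤ 2 * w := by
    by_contra hlt
    push_neg at hlt
    have hsq1 : h * h ∈ Vp p (w + w) := mul_mem_Vp hh hh
    have hsq2 : h * h ∉ Vp p (w + w - 1) :=
      mul_notMem hw1 hw1 (by omega) hh hh' hh hh'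
    have hmem : 2 * w ∈ DS := by
      refine ⟨by omega, by omega, h * h, Minv_mul hhM hhM, ?_, ?_⟩
      · rw [show 2 * w = w + w by ring]; exact hsq1
      · rw [show 2 * w - 1 = w + w - 1 by ring_nf]; exact hsq2
    have := le_csSup hbdd hmem
    omega
  set d : ℕ := p - 1 - w with hd
  have hd1 : 1 ≤ d := by omega
  have hdw : w + d = p - 1 := by omega
  have h2d : 2 * d ≤ p - 1 := by omega
  -- descent steps
  have Hsub : ∀ j, d ≤ j → j ≤ p - 1 → InvJ G j → InvJ G (j - d) := by
    intro j hdj hjp hinv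
    exact InvJ_sub hτ hw1 hw2 hdw hhM hh hh' hdj hjp hinv
  have Hmany : ∀ (n : ℕ) (j : ℕ), j ≤ p - 1 → InvJ G j → InvJ G (j - n * d) := by
    intro n
    induction n with
    | zero => intro j _ hi; simpa using hi
    | succ n IH =>
      intro j hj hi
      have hstep := IH j hj hi
      by_cases hc : d ≤ j - n * d
      · have := Hsub _ hc (by omega) hstep
        have e : j - n * d - d = j - (n + 1) * d := by
          rw [Nat.succ_mul, Nat.sub_sub]
        rwa [e] at this
      · have e : j - (n + 1) * d = 0 := by
          have hsm : (n + 1) * d = n * d + d := by ring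
          omega
        rw [e]
        exact InvJ_zero
  have hmodid : ∀ x : ℕ, x - (x / d) * d = x % d := by
    intro x
    have := Nat.div_add_mod' x d
    omega
  have hrho : InvJ G ((p - 1) % d) := by
    have := Hmany ((p - 1) / d) (p - 1) le_rfl InvJ_top
    rwa [hmodid] at this
  set ρ : ℕ := (p - 1) % d with hρdef
  have hρ : ρ < d := Nat.mod_lt _ (by omega)
  have hperp : InvJ G (p - 2 - ρ) := InvJ_perp (by omega) hrho
  have hq2 : 2 ≤ (p - 1) / d := (Nat.le_div_iff_mul_le (by omega)).2 (by omega)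
  have hdm1 : InvJ G (d - 1) := by
    have hmain := Hmany ((p - 2 - ρ) / d) (p - 2 - ρ) (by omega) hperp
    rw [hmodid] at hmain
    have e2 : (p - 2 - ρ) % d = d - 1 := by
      have hq := Nat.div_add_mod (p - 1) d
      obtain ⟨q', hq'⟩ : ∃ q', (p - 1) / d = q' + 2 := ⟨(p - 1) / d - 2, by omega⟩
      rw [hq'] at hq
      have hexp : d * (q' + 2) = d * q' + d + d := by ring
      rw [hexp] at hq
      have e3 : p - 2 - ρ = (d - 1) + (q' + 1) * d := by
        have : (q' + 1) * d = q' * d + d := by ring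
        rw [this]
        have : d * q' = q' * d := Nat.mul_comm _ _
        omega
      rw [e3, Nat.add_mul_mod_self_right, Nat.mod_eq_of_lt (by omega)]
    rwa [e2] at hmain
  rcases eq_or_lt_of_le hd1 with hd1' | hd2
  · -- d = 1
    have := Hmany (p - 2) (p - 1) le_rfl InvJ_top
    have e : p - 1 - (p - 2) * d = 1 := by
      rw [← hd1']
      omega
    rwa [e] at this
  · -- d ≥ 2 : chain down from d-1 to 1
    have hchain : ∀ k : ℕ, k ≤ d - 2 → InvJ G (d - 1 - k) := by
      intro k
      induction k with
      | zero => intro _; simpa using hdm1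
      | succ k IH =>
        intro hk
        have hk' := IH (by omega)
        have hadd : InvJ G ((d - 1) + (d - 1 - k)) := InvJ_mulclosed hdm1 hk'
        have := Hsub _ (by omega) (by omega) hadd
        have e : (d - 1) + (d - 1 - k) - d = d - 1 - (k + 1) := by omega
        rwa [e] at this
    have := hchain (d - 2) le_rfl
    have e : d - 1 - (d - 2) = 1 := by omega
    rwa [e] at this

theorem affine_of_nontrans (hp3 : 3 ≤ p)
    (hτ : ∀ a : ZMod p, Equiv.addLeft a ∈ G)
    (hnt : ∃ b : ZMod p, b ≠ 0 ∧ ∀ g ∈ G, g 0 = 0 → g 1 ≠ b) :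
    ∀ g : Equiv.Perm (ZMod p), g ∈ G → ∃ u a : ZMod p, u ≠ 0 ∧ ∀ x, g x = u * x + a := by
  have h1 := InvJ_one hp3 hτ hnt
  intro g hg
  have hmem : (Fm p 1) ∘ g ∈ Vp p 1 := h1 g hg (Fm p 1) (Fm_mem_Vp le_rfl)
  have himg : Fm p '' {s | s ≤ 1} = {Fm p 0, Fm p 1} := by
    ext y; constructor
    · rintro ⟨s, hs, rfl⟩
      have hs' : s ≤ 1 := hs
      interval_cases s
      · exact Or.inl rfl
      · exact Or.inr rfl
    · rintro (rfl | rfl)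
      · exact ⟨0, by norm_num, rfl⟩
      · exact ⟨1, by norm_num, rfl⟩
  rw [Vp, himg, Submodule.mem_span_pair] at hmem
  obtain ⟨a, u, huv⟩ := hmem
  have hval : ∀ x : ZMod p, g x = u * x + a := by
    intro x
    have := congrFun huv x
    simp only [Pi.add_apply, Pi.smul_apply, smul_eq_mul, Fm, pow_zero, pow_one,
      Function.comp_apply] at this
    rw [← this]
    ring
  refine ⟨u, a, ?_, hval⟩
  intro hu0
  have h01 : g 0 = g 1 := by
    rw [hval 0, hval 1, hu0]
    ring
  have := g.injective h01
  exact one_ne_zero this.symm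

end Descent

end BZaux

def cayley {G : Type*} [Group G] (S : Set G) : SimpleGraph G where
  Adj x y := x ≠ y ∧ (x⁻¹ * y ∈ S ∨ y⁻¹ * x ∈ S)
  symm := ⟨fun x y h => ⟨h.1.symm, h.2.symm⟩⟩
  loopless := ⟨fun x h => h.1 rfl⟩

def addCayley {G : Type*} [AddGroup G] (T : Set G) : SimpleGraph G where
  Adj x y := x ≠ y ∧ (y - x ∈ T ∨ x - y ∈ T)
  symm := ⟨fun x y h => ⟨h.1.symm, h.2.symm⟩⟩
  loopless := ⟨fun x h => h.1 rfl⟩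

def graphAut {V : Type*} (G : SimpleGraph V) : Subgroup (Equiv.Perm V) where
  carrier := {f | ∀ x y, G.Adj (f x) (f y) ↔ G.Adj x y}
  one_mem' := by intro x y; rfl
  mul_mem' := by
    intro a b ha hb x y
    rw [Equiv.Perm.mul_apply, Equiv.Perm.mul_apply, ha, hb]
  inv_mem' := by
    intro f hf x y
    rw [← hf (f⁻¹ x) (f⁻¹ y)]; simp

def rAct (p : ℕ) : (ZMod p)ˣ →* MulAut (Multiplicative (ZMod p)) where
  toFun u := AddEquiv.toMultiplicative (AddAut.mulLeft u)
  map_one' := by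
    ext x
    simp [AddEquiv.toMultiplicative, AddAut.mulLeft]
  map_mul' := by
    intro u v
    ext x
    simp [AddEquiv.toMultiplicative, AddAut.mulLeft, mul_smul]

theorem stmt5 (p : ℕ) (hp : p.Prime) (hp3 : 3 ≤ p)
    (H : Subgroup (ZMod p)ˣ) (hH : H ≠ ⊤)
    (T : Set (ZMod p)) (h0 : (0 : ZMod p) ∉ T) (hsym : ∀ t ∈ T, -t ∈ T)
    (hgen : AddSubgroup.closure T = ⊤)
    (hHT : ∀ u ∈ H, (fun x => (u : ZMod p) * x) '' T = T)
    (hmax : ∀ K : Subgroup (ZMod p)ˣ, (∀ u ∈ K, (fun x => (u : ZMod p) * x) '' T = T) → K ≤ H)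
    (h2t : ¬ (∀ x₁ x₂ y₁ y₂ : ZMod p, x₁ ≠ x₂ → y₁ ≠ y₂ →
        ∃ f : addCayley T ≃g addCayley T, f x₁ = y₁ ∧ f x₂ = y₂)) :
    Nonempty
      ((graphAut (addCayley T)) ≃*
        (Multiplicative (ZMod p) ⋊[(rAct p).comp H.subtype] H)) := by
  classical
  haveI : Fact p.Prime := ⟨hp⟩
  -- translations are graph automorphisms
  have hτ : ∀ a : ZMod p, Equiv.addLeft a ∈ graphAut (addCayley T) := by
    intro a x y
    show ((a + x ≠ a + y) ∧ ((a + y) - (a + x) ∈ T ∨ (a + x) - (a + y) ∈ T)) ↔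
      ((x ≠ y) ∧ (y - x ∈ T ∨ x - y ∈ T))
    have e1 : (a + y) - (a + x) = y - x := by ring
    have e2 : (a + x) - (a + y) = x - y := by ring
    rw [e1, e2, Ne, add_right_inj]
  by_cases htrans : ∀ b : ZMod p, b ≠ 0 →
      ∃ g : Equiv.Perm (ZMod p), g ∈ graphAut (addCayley T) ∧ g 0 = 0 ∧ g 1 = b
  · -- two-transitive case: contradicts h2t
    exfalso
    apply h2t
    intro x₁ x₂ y₁ y₂ hx hy
    obtain ⟨gc, hgc, hgc0, hgc1⟩ := htrans (x₂ - x₁) (sub_ne_zero.2 (Ne.symm hx))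
    obtain ⟨gb, hgb, hgb0, hgb1⟩ := htrans (y₂ - y₁) (sub_ne_zero.2 (Ne.symm hy))
    set f : Equiv.Perm (ZMod p) :=
      Equiv.addLeft y₁ * (gb * gc⁻¹) * Equiv.addLeft (-x₁) with hfdef
    have hfG : f ∈ graphAut (addCayley T) :=
      mul_mem (mul_mem (hτ _) (mul_mem hgb (inv_mem hgc))) (hτ _)
    have hgcinv0 : gc⁻¹ 0 = 0 :=
      gc.injective (by rw [Equiv.Perm.coe_inv, Equiv.apply_symm_apply, hgc0])
    have hgcinv1 : gc⁻¹ (x₂ - x₁) = 1 :=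
      gc.injective (by rw [Equiv.Perm.coe_inv, Equiv.apply_symm_apply, hgc1])
    have hf1 : f x₁ = y₁ := by
      simp only [hfdef, Equiv.Perm.mul_apply, Equiv.coe_addLeft]
      rw [neg_add_cancel, hgcinv0, hgb0, add_zero]
    have hf2 : f x₂ = y₂ := by
      simp only [hfdef, Equiv.Perm.mul_apply, Equiv.coe_addLeft]
      rw [neg_add_eq_sub, hgcinv1, hgb1, add_sub_cancel]
    exact ⟨{ toEquiv := f, map_rel_iff' := fun {a b} => hfG a b }, hf1, hf2⟩
  · push_neg at htrans
    obtain ⟨b₀, hb₀ne, hb₀⟩ := htrans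
    have hnt : ∃ b : ZMod p, b ≠ 0 ∧
        ∀ g ∈ graphAut (addCayley T), g 0 = 0 → g 1 ≠ b := by
      exact ⟨b₀, hb₀ne, hb₀⟩
    have haff := BZaux.affine_of_nontrans hp3 hτ hnt
    -- the multiplier subgroup
    set K : Subgroup (ZMod p)ˣ :=
      { carrier := {u : (ZMod p)ˣ | (fun x => (u : ZMod p) * x) '' T = T}
        one_mem' := by
          show (fun x => ((1 : (ZMod p)ˣ) : ZMod p) * x) '' T = T
          simp
        mul_mem' := by
          intro u v hu hv
          show (fun x => ((u * v : (ZMod p)ˣ) : ZMod p) * x) '' T = T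
          have hcomp : (fun x => ((u * v : (ZMod p)ˣ) : ZMod p) * x)
              = (fun x => (u : ZMod p) * x) ∘ (fun x => (v : ZMod p) * x) := by
            funext x
            simp [Units.val_mul, mul_assoc]
          rw [hcomp, Set.image_comp, hv, hu]
        inv_mem' := by
          intro u hu
          show (fun x => ((u⁻¹ : (ZMod p)ˣ) : ZMod p) * x) '' T = T
          have hu' : (fun x => (u : ZMod p) * x) '' T = T := hu
          conv_lhs => rw [← hu']
          rw [← Set.image_comp]
          have hcomp : ((fun x => ((u⁻¹ : (ZMod p)ˣ) : ZMod p) * x) ∘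
              (fun x => (u : ZMod p) * x)) = id := by
            funext x
            show ((u⁻¹ : (ZMod p)ˣ) : ZMod p) * (((u : (ZMod p)ˣ) : ZMod p) * x) = x
            rw [← mul_assoc, ← Units.val_mul, inv_mul_cancel, Units.val_one, one_mul]
          rw [hcomp, Set.image_id] } with hK
    have hKH : K ≤ H := hmax K (fun u hu => hu)
    -- multiplications by elements of H are graph automorphisms
    have hmulmem : ∀ u : H,
        Equiv.mulLeft₀ ((u : (ZMod p)ˣ) : ZMod p) (Units.ne_zero _) ∈
          graphAut (addCayley T) := by
      intro u x y
      have hu := hHT (u : (ZMod p)ˣ) u.2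
      have hune : ((u : (ZMod p)ˣ) : ZMod p) ≠ 0 := Units.ne_zero _
      have hTiff : ∀ t : ZMod p, t ∈ T ↔ ((u : (ZMod p)ˣ) : ZMod p) * t ∈ T := by
        intro t
        constructor
        · intro ht
          have hmem : ((u : (ZMod p)ˣ) : ZMod p) * t ∈
              (fun x => ((u : (ZMod p)ˣ) : ZMod p) * x) '' T := ⟨t, ht, rfl⟩
          rwa [hu] at hmem
        · intro ht
          rw [← hu] at ht
          obtain ⟨t', ht', he⟩ := ht
          have : t' = t := mul_left_cancel₀ hune he
          rwa [← this]
      show (((u : (ZMod p)ˣ) : ZMod p) * x ≠ ((u : (ZMod p)ˣ) : ZMod p) * y ∧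
          (((u : (ZMod p)ˣ) : ZMod p) * y - ((u : (ZMod p)ˣ) : ZMod p) * x ∈ T ∨
            ((u : (ZMod p)ˣ) : ZMod p) * x - ((u : (ZMod p)ˣ) : ZMod p) * y ∈ T)) ↔
        (x ≠ y ∧ (y - x ∈ T ∨ x - y ∈ T))
      have e1 : ((u : (ZMod p)ˣ) : ZMod p) * y - ((u : (ZMod p)ˣ) : ZMod p) * x
          = ((u : (ZMod p)ˣ) : ZMod p) * (y - x) := by ring
      have e2 : ((u : (ZMod p)ˣ) : ZMod p) * x - ((u : (ZMod p)ˣ) : ZMod p) * y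
          = ((u : (ZMod p)ˣ) : ZMod p) * (x - y) := by ring
      rw [e1, e2, ← hTiff (y - x), ← hTiff (x - y), Ne, mul_right_inj' hune]
    set f₁ : Multiplicative (ZMod p) →* (graphAut (addCayley T)) :=
      { toFun := fun a => ⟨Equiv.addLeft a.toAdd, hτ _⟩
        map_one' := by
          apply Subtype.ext
          apply Equiv.ext
          intro x
          simp
        map_mul' := by
          intro a b
          apply Subtype.ext
          apply Equiv.ext
          intro x
          simp [Equiv.Perm.mul_apply, add_assoc] } with hf₁
    set f₂ : H →* (graphAut (addCayley T)) :=
      { toFun := fun u => ⟨Equiv.mulLeft₀ _ (Units.ne_zero (u : (ZMod p)ˣ)), hmulmem u⟩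
        map_one' := by
          apply Subtype.ext
          apply Equiv.ext
          intro x
          simp
        map_mul' := by
          intro u v
          apply Subtype.ext
          apply Equiv.ext
          intro x
          simp [Equiv.Perm.mul_apply, Units.val_mul, mul_assoc] } with hf₂
    have hcomp : ∀ u : H,
        f₁.comp (MulEquiv.toMonoidHom (((rAct p).comp H.subtype) u)) =
          (MulEquiv.toMonoidHom (MulAut.conj (f₂ u))).comp f₁ := by
      intro u
      refine MonoidHom.ext fun a => Subtype.ext (Equiv.ext fun x => ?_)
      have hune : ((u : (ZMod p)ˣ) : ZMod p) ≠ 0 := Units.ne_zero _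
      show Equiv.addLeft (Multiplicative.toAdd ((((rAct p).comp H.subtype) u) a)) x = _
      simp only [rAct, MonoidHom.comp_apply, MonoidHom.coe_mk, OneHom.coe_mk,
        MulAut.conj_apply]
      simp only [MulEquiv.toMonoidHom_eq_coe, MonoidHom.coe_coe]
      show Multiplicative.toAdd (AddEquiv.toMultiplicative (AddAut.mulLeft (H.subtype u)) a) + x
        = ((f₂ u * f₁ a * (f₂ u)⁻¹ : graphAut (addCayley T)) : Equiv.Perm (ZMod p)) x
      have hL : Multiplicative.toAdd
          (AddEquiv.toMultiplicative (AddAut.mulLeft (H.subtype u)) a)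
          = ((u : (ZMod p)ˣ) : ZMod p) * Multiplicative.toAdd a := rfl
      rw [hL]
      have hR : ((f₂ u * f₁ a * (f₂ u)⁻¹ : graphAut (addCayley T)) : Equiv.Perm (ZMod p)) x
          = ((u : (ZMod p)ˣ) : ZMod p) *
            (Multiplicative.toAdd a + (((u : (ZMod p)ˣ) : ZMod p))⁻¹ * x) := rfl
      rw [hR]
      rw [mul_add, mul_inv_cancel_left₀ hune]
    set Ψ := SemidirectProduct.lift f₁ f₂ hcomp with hΨ
    have hΨval : ∀ (n : Multiplicative (ZMod p)) (u : H) (x : ZMod p),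
        ((Ψ ⟨n, u⟩ : graphAut (addCayley T)) : Equiv.Perm (ZMod p)) x
          = Multiplicative.toAdd n + ((u : (ZMod p)ˣ) : ZMod p) * x := by
      intro n u x
      have hmk : (⟨n, u⟩ : Multiplicative (ZMod p) ⋊[(rAct p).comp H.subtype] H)
          = SemidirectProduct.inl n * SemidirectProduct.inr u :=
        SemidirectProduct.mk_eq_inl_mul_inr u n
      rw [hmk, map_mul, SemidirectProduct.lift_inl, SemidirectProduct.lift_inr]
      rfl
    have hinj : Function.Injective Ψ := by
      rw [injective_iff_map_eq_one]
      rintro ⟨n, u⟩ hz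
      have h0' := congrArg
        (fun g : (graphAut (addCayley T)) => ((g : Equiv.Perm (ZMod p)) 0)) hz
      have h1' := congrArg
        (fun g : (graphAut (addCayley T)) => ((g : Equiv.Perm (ZMod p)) 1)) hz
      rw [hΨval] at h0' h1'
      have hid0 : (((1 : graphAut (addCayley T)) : Equiv.Perm (ZMod p)) (0 : ZMod p)) = 0 := rfl
      have hid1 : (((1 : graphAut (addCayley T)) : Equiv.Perm (ZMod p)) (1 : ZMod p)) = 1 := rfl
      rw [hid0] at h0'
      rw [hid1] at h1'
      rw [mul_zero, add_zero] at h0'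
      rw [mul_one, h0', zero_add] at h1'
      have hn : n = 1 := by
        have : Multiplicative.toAdd n = Multiplicative.toAdd (1 : Multiplicative (ZMod p)) := h0'
        exact Multiplicative.toAdd.injective this
      have hu : u = 1 := by
        apply Subtype.ext
        apply Units.ext
        exact h1'
      rw [hn, hu]
      rfl
    have hsurj : Function.Surjective Ψ := by
      rintro ⟨gp, hgp⟩
      obtain ⟨u, a, hu, hval⟩ := haff gp hgp
      have hstep : ∀ (v : ZMod p), v ≠ 0 → ∀ σ : Equiv.Perm (ZMod p),
          σ ∈ graphAut (addCayley T) → (∀ x, σ x = v * x) → ∀ t ∈ T, v * t ∈ T := by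
        intro v hv σ hσ hσval t ht
        have ht0 : t ≠ 0 := fun h => h0 (h ▸ ht)
        have hadj : (addCayley T).Adj 0 t := ⟨Ne.symm ht0, Or.inl (by rwa [sub_zero])⟩
        have hadj2 := (hσ 0 t).2 hadj
        rw [hσval 0, hσval t, mul_zero] at hadj2
        obtain ⟨hne, hor⟩ := hadj2
        rcases hor with h1 | h1
        · rwa [sub_zero] at h1
        · rw [zero_sub] at h1
          have := hsym _ h1
          rwa [neg_neg] at this
      set σ : Equiv.Perm (ZMod p) := Equiv.addLeft (-a) * gp with hσdef
      have hσG : σ ∈ graphAut (addCayley T) := mul_mem (hτ _) hgp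
      have hσval : ∀ x, σ x = u * x := by
        intro x
        simp only [hσdef, Equiv.Perm.mul_apply, Equiv.coe_addLeft, hval x]
        ring
      have hσinv : ∀ x, σ⁻¹ x = u⁻¹ * x := by
        intro x
        apply σ.injective
        rw [Equiv.Perm.coe_inv, Equiv.apply_symm_apply, hσval, mul_inv_cancel_left₀ hu]
      have hTeq : (fun x => u * x) '' T = T := by
        apply Set.Subset.antisymm
        · rintro _ ⟨t, ht, rfl⟩
          exact hstep u hu σ hσG hσval t ht
        · intro t ht
          refine ⟨u⁻¹ * t, ?_, ?_⟩
          · exact hstep u⁻¹ (inv_ne_zero hu) σ⁻¹ (inv_mem hσG) hσinv t ht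
          · simp only
            rw [mul_inv_cancel_left₀ hu]
      have huK : Units.mk0 u hu ∈ K := hTeq
      have huH : Units.mk0 u hu ∈ H := hKH huK
      refine ⟨⟨Multiplicative.ofAdd a, ⟨Units.mk0 u hu, huH⟩⟩, ?_⟩
      apply Subtype.ext
      apply Equiv.ext
      intro x
      rw [hΨval]
      show a + u * x = gp x
      rw [hval x]
      ring
    exact ⟨(MulEquiv.ofBijective Ψ ⟨hinj, hsurj⟩).symm⟩
end

section
/- Fix k ≥ 2 and integers t_1, ..., t_{k-1} ≥ 2. Let M = max{1, t_1, ..., t_{k-1}}, Q = max over a,b ∈ {1, t_1, ..., t_{k-1}} of (ab + M), and let p > Q be prime. Set T = {±1, ±t_1, ..., ±t_{k-1}} ⊆ ℤ_p. Then the only units m ∈ ℤ_p^× with m·T = T are m = ±1. -/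
theorem stmt7 (k : ℕ) (hk : 2 ≤ k) (t : Fin (k - 1) → ℕ) (ht : ∀ i, 2 ≤ t i)
    (M Q p : ℕ)
    (hM : M = max 1 (Finset.univ.sup t))
    (B : Finset ℕ) (hB : B = insert 1 (Finset.image t Finset.univ))
    (hQ : Q = (B ×ˢ B).sup (fun ab => ab.1 * ab.2 + M))
    (hp : p.Prime) (hpQ : Q < p)
    (T : Set (ZMod p))
    (hT : T = {x | x = 1 ∨ x = -1 ∨ ∃ i, x = (t i : ZMod p) ∨ x = -(t i : ZMod p)})
    (m : (ZMod p)ˣ) (hm : (fun x => (m : ZMod p) * x) '' T = T) :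
    (m : ZMod p) = 1 ∨ (m : ZMod p) = -1 := by
  have hM1 : 1 ≤ M := hM ▸ le_max_left _ _
  have h1B : (1:ℕ) ∈ B := by rw [hB]; exact Finset.mem_insert_self _ _
  have hBle : ∀ b ∈ B, b ≤ M := by
    intro b hb
    rw [hB] at hb
    rcases Finset.mem_insert.1 hb with rfl | hb
    · exact hM1
    · obtain ⟨i, _, rfl⟩ := Finset.mem_image.1 hb
      exact hM ▸ le_max_of_le_right (Finset.le_sup (Finset.mem_univ i))
  have hBpos : ∀ b ∈ B, 1 ≤ b := by
    intro b hb; rw [hB] at hb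
    rcases Finset.mem_insert.1 hb with rfl | hb
    · exact le_refl 1
    · obtain ⟨i, _, rfl⟩ := Finset.mem_image.1 hb
      exact le_trans one_le_two (ht i)
  have hQb : ∀ u ∈ B, ∀ v ∈ B, u * v + M ≤ Q := by
    intro u hu v hv
    have hmem : (u, v) ∈ B ×ˢ B := Finset.mem_product.2 ⟨hu, hv⟩
    rw [hQ]
    exact Finset.le_sup (f := fun ab : ℕ × ℕ => ab.1 * ab.2 + M) hmem
  have hQp : ∀ u ∈ B, ∀ v ∈ B, u * v + M < p := fun u hu v hv =>
    lt_of_le_of_lt (hQb u hu v hv) hpQ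
  have hcast : ∀ u v : ℕ, u < p → v < p → (u : ZMod p) = v → u = v := by
    intro u v hu hv h
    have := congrArg ZMod.val h
    rwa [ZMod.val_cast_of_lt hu, ZMod.val_cast_of_lt hv] at this
  have hneg : ∀ u v : ℕ, 0 < u + v → u + v < p → (u : ZMod p) = -(v : ZMod p) → False := by
    intro u v h0 hlt h
    have h2 : ((u + v : ℕ) : ZMod p) = 0 := by push_cast; rw [h]; ring
    rw [ZMod.natCast_eq_zero_iff] at h2
    exact absurd (Nat.le_of_dvd h0 h2) (not_le.2 hlt)
  have hA : ∀ x ∈ T, ∃ s ∈ B, x = (s : ZMod p) ∨ x = -(s : ZMod p) := by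
    intro x hx
    rw [hT] at hx
    rcases hx with rfl | rfl | ⟨i, rfl | rfl⟩
    · exact ⟨1, h1B, Or.inl (by norm_num)⟩
    · exact ⟨1, h1B, Or.inr (by norm_num)⟩
    · exact ⟨t i, hB ▸ Finset.mem_insert_of_mem
        (Finset.mem_image_of_mem t (Finset.mem_univ i)), Or.inl rfl⟩
    · exact ⟨t i, hB ▸ Finset.mem_insert_of_mem
        (Finset.mem_image_of_mem t (Finset.mem_univ i)), Or.inr rfl⟩
  have hBT : ∀ s ∈ B, (s : ZMod p) ∈ T := by
    intro s hs; rw [hB] at hs; rw [hT]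
    rcases Finset.mem_insert.1 hs with rfl | hs
    · left; norm_num
    · obtain ⟨i, _, rfl⟩ := Finset.mem_image.1 hs
      exact Or.inr (Or.inr ⟨i, Or.inl rfl⟩)
  have h1T : (1 : ZMod p) ∈ T := by rw [hT]; left; rfl
  have hmT : (m : ZMod p) ∈ T := by
    rw [← hm]; exact ⟨1, h1T, by simp⟩
  obtain ⟨s, hsB, hms⟩ := hA _ hmT
  by_cases hs1 : s = 1
  · subst hs1
    rcases hms with h | h
    · left; simpa using h
    · right; simpa using h
  exfalso
  have hs2 : 2 ≤ s := by
    rw [hB] at hsB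
    rcases Finset.mem_insert.1 hsB with rfl | h
    · exact absurd rfl hs1
    · obtain ⟨i, _, rfl⟩ := Finset.mem_image.1 h
      exact ht i
  have key : ∀ b ∈ B, s * b ∈ B := by
    intro b hb
    have hbT := hBT b hb
    have hmb : (m : ZMod p) * (b : ZMod p) ∈ T := by
      rw [← hm]; exact ⟨b, hbT, rfl⟩
    obtain ⟨s', hs'B, h'⟩ := hA _ hmb
    have hcases : ((s * b : ℕ) : ZMod p) = (s' : ZMod p) ∨
        ((s * b : ℕ) : ZMod p) = -(s' : ZMod p) := by
      rcases hms with h | h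
      · rcases h' with h' | h'
        · left; push_cast; linear_combination h' - (b : ZMod p) * h
        · right; push_cast; linear_combination h' - (b : ZMod p) * h
      · rcases h' with h' | h'
        · right; push_cast; linear_combination (b : ZMod p) * h - h'
        · left; push_cast; linear_combination (b : ZMod p) * h - h'
    have hsbp : s * b < p := lt_of_lt_of_le (by omega) (le_of_lt (hQp s hsB b hb))
    have hs'p : s' < p := by
      have := hQp 1 h1B 1 h1B
      have := hBle s' hs'B
      omega
    rcases hcases with h | h
    · have := hcast _ _ hsbp hs'p h
      rw [this]; exact hs'B
    · exact absurd h (by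
        intro hh
        exact hneg (s * b) s' (by
          have := hBpos b hb; have := hBpos s' hs'B; positivity)
          (by have := hBle s' hs'B; have := hQp s hsB b hb; omega) hh)
  have hne : B.Nonempty := ⟨1, h1B⟩
  have hNmem := B.max'_mem hne
  have hNle := B.le_max' (s * B.max' hne) (key _ hNmem)
  have hN1 := hBpos _ hNmem
  nlinarith [hN1, hs2, hNle]
end

section
/- Let n ≥ 3, k ∈ {1,...,n−1} with k ≠ n/2 when n is even, and S = {r, r^{−1}, s, s r^k} ⊆ D_{2n}. Then Aut(D_{2n}, S) = {id, φ} ≅ C_2, where φ is the automorphism r ↦ r^{−1}, s ↦ s r^k. -/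
namespace Stmt17Aux
open DihedralGroup

variable {n : ℕ}

/-- The candidate automorphism as a plain function. -/
def phiFun (k : ZMod n) : DihedralGroup n → DihedralGroup n
  | r a => r (-a)
  | sr b => sr (k - b)

lemma phiFun_r (k a : ZMod n) : phiFun k (r a) = r (-a) := rfl

lemma phiFun_sr (k b : ZMod n) : phiFun k (sr b) = sr (k - b) := rfl

/-- The automorphism `r ↦ r⁻¹`, `s ↦ s r^k`. -/
def phi (k : ZMod n) : DihedralGroup n ≃* DihedralGroup n where
  toFun := phiFun k
  invFun := phiFun k
  left_inv := by rintro (a | a) <;> simp [phiFun_r, phiFun_sr]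
  right_inv := by rintro (a | a) <;> simp [phiFun_r, phiFun_sr]
  map_mul' := by
    rintro (a | a) (b | b) <;>
      simp only [r_mul_r, r_mul_sr, sr_mul_r, sr_mul_sr, phiFun_r, phiFun_sr, r.injEq,
        sr.injEq] <;> ring

@[simp] lemma phi_apply (k : ZMod n) (x : DihedralGroup n) : phi k x = phiFun k x := rfl

lemma r_pow (u : ZMod n) (m : ℕ) : (r u : DihedralGroup n) ^ m = r ((m : ZMod n) * u) := by
  induction m with
  | zero => simp
  | succ m ih =>
    rw [pow_succ, ih, r_mul_r]
    congr 1
    push_cast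
    ring

lemma r_eq_pow [NeZero n] (a : ZMod n) : (r a : DihedralGroup n) = (r 1) ^ a.val := by
  rw [r_pow, ZMod.natCast_val, ZMod.cast_id, mul_one]

/-- A `MulEquiv` of the dihedral group is determined by its values on `r 1` and `sr 0`. -/
lemma eq_of_r_sr [NeZero n] (ψ χ : DihedralGroup n ≃* DihedralGroup n)
    (h1 : ψ (r 1) = χ (r 1)) (h2 : ψ (sr 0) = χ (sr 0)) : ∀ x, ψ x = χ x := by
  have hr : ∀ a : ZMod n, ψ (r a) = χ (r a) := by
    intro a
    rw [r_eq_pow a, map_pow, map_pow, h1]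
  rintro (a | a)
  · exact hr a
  · have hsr : (sr a : DihedralGroup n) = sr 0 * r a := by simp
    rw [hsr, map_mul, map_mul, h2, hr]

end Stmt17Aux

open Stmt17Aux in
open DihedralGroup in
theorem stmt17 (n : ℕ) (hn : 3 ≤ n) (k : ZMod n) (hk : k ≠ 0) (hk2 : 2 * k ≠ 0)
    (S : Set (DihedralGroup n)) (hS : S = {r 1, r (-1), sr 0, sr k}) :
    (∀ ψ : DihedralGroup n ≃* DihedralGroup n,
        ((fun x => ψ x) '' S = S ↔
          ((ψ (r 1) = r 1 ∧ ψ (sr 0) = sr 0) ∨ (ψ (r 1) = r (-1) ∧ ψ (sr 0) = sr k)))) ∧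
      Nat.card {ψ : DihedralGroup n ≃* DihedralGroup n // (fun x => ψ x) '' S = S} = 2 := by
  haveI : NeZero n := ⟨by omega⟩
  have h2n : (2 : ZMod n) ≠ 0 := by
    have h : ((2 : ℕ) : ZMod n) ≠ 0 := by
      rw [Ne, ZMod.natCast_eq_zero_iff]
      intro hdvd
      exact absurd (Nat.le_of_dvd (by norm_num) hdvd) (by omega)
    simpa using h
  have hkk : k + k ≠ 0 := by rwa [← two_mul]
  have hone : (1 : ZMod n) ≠ -1 := fun h => h2n (by linear_combination h)
  have key : ∀ ψ : DihedralGroup n ≃* DihedralGroup n,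
      ((fun x => ψ x) '' S = S ↔
        ((ψ (r 1) = r 1 ∧ ψ (sr 0) = sr 0) ∨ (ψ (r 1) = r (-1) ∧ ψ (sr 0) = sr k))) := by
    intro ψ
    constructor
    · intro hIm
      have hmem : ∀ x ∈ S, ψ x ∈ S := by
        intro x hx
        rw [← hIm]
        exact Set.mem_image_of_mem _ hx
      have hr1 : ψ (r 1) ∈ S := hmem _ (by simp [hS])
      have hsr0 : ψ (sr 0) ∈ S := hmem _ (by simp [hS])
      rw [hS] at hr1 hsr0
      simp only [Set.mem_insert_iff, Set.mem_singleton_iff] at hr1 hsr0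
      -- ψ (r 1) cannot be a reflection
      have hnot_sr : ∀ v : ZMod n, ψ (r 1) ≠ sr v := by
        intro v hv
        have h2 : ψ (r 2) = 1 := by
          rw [show (r 2 : DihedralGroup n) = r 1 * r 1 by rw [r_mul_r]; norm_num,
            map_mul, hv, sr_mul_sr, sub_self, one_def]
        have h3 : (r 2 : DihedralGroup n) = 1 := ψ.injective (by rw [h2, map_one])
        rw [one_def, r.injEq] at h3
        exact h2n h3
      -- ψ (sr 0) cannot be a rotation r v with r v ∈ S
      have hsq : ψ (sr 0) * ψ (sr 0) = 1 := by
        rw [← map_mul, sr_mul_sr, sub_self, ← one_def, map_one]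
      have hnot_r : ∀ v : ZMod n, ψ (sr 0) = r v → v + v = 0 := by
        intro v hv
        rw [hv, r_mul_r, one_def, r.injEq] at hsq
        exact hsq
      rcases hr1 with h1 | h1 | h1 | h1
      · -- ψ (r 1) = r 1
        have hrval : ∀ a : ZMod n, ψ (r a) = r a := by
          intro a
          rw [r_eq_pow a, map_pow, h1, ← r_eq_pow]
        rcases hsr0 with h2 | h2 | h2 | h2
        · exact absurd (hnot_r 1 h2) (fun h => h2n (by linear_combination h))
        · have := hnot_r (-1) h2
          exact absurd (by linear_combination -this : (2 : ZMod n) = 0) h2n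
        · exact Or.inl ⟨h1, h2⟩
        · -- ψ (sr 0) = sr k leads to contradiction
          exfalso
          have hsk : ψ (sr k) = sr (k + k) := by
            rw [show (sr k : DihedralGroup n) = sr 0 * r k by rw [sr_mul_r, zero_add],
              map_mul, h2, hrval, sr_mul_r]
          have hmemk : ψ (sr k) ∈ S := hmem _ (by simp [hS])
          rw [hS, hsk] at hmemk
          simp only [Set.mem_insert_iff, Set.mem_singleton_iff, sr.injEq, reduceCtorEq,
            false_or] at hmemk
          rcases hmemk with h | h
          · exact hkk h
          · exact hk (by linear_combination h)
      · -- ψ (r 1) = r (-1)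
        have hrval : ∀ a : ZMod n, ψ (r a) = r (-a) := by
          intro a
          rw [r_eq_pow a, map_pow, h1, Stmt17Aux.r_pow]
          congr 1
          rw [ZMod.natCast_val, ZMod.cast_id]
          ring
        rcases hsr0 with h2 | h2 | h2 | h2
        · exact absurd (hnot_r 1 h2) (fun h => h2n (by linear_combination h))
        · have := hnot_r (-1) h2
          exact absurd (by linear_combination -this : (2 : ZMod n) = 0) h2n
        · -- ψ (sr 0) = sr 0 leads to contradiction
          exfalso
          have hsk : ψ (sr k) = sr (-k) := by
            rw [show (sr k : DihedralGroup n) = sr 0 * r k by rw [sr_mul_r, zero_add],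
              map_mul, h2, hrval, sr_mul_r, zero_add]
          have hmemk : ψ (sr k) ∈ S := hmem _ (by simp [hS])
          rw [hS, hsk] at hmemk
          simp only [Set.mem_insert_iff, Set.mem_singleton_iff, sr.injEq, reduceCtorEq,
            false_or] at hmemk
          rcases hmemk with h | h
          · exact hk (by linear_combination -h)
          · exact hkk (by linear_combination -h)
        · exact Or.inr ⟨h1, h2⟩
      · exact absurd h1 (hnot_sr 0)
      · exact absurd h1 (hnot_sr k)
    · rintro (⟨h1, h2⟩ | ⟨h1, h2⟩)
      · have hid : ∀ x, ψ x = x :=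
          eq_of_r_sr ψ (MulEquiv.refl _) (by simpa using h1) (by simpa using h2)
        have hfun : (fun x => ψ x) = fun x => x := funext hid
        rw [hfun, Set.image_id']
      · have hphi : ∀ x, ψ x = phi k x :=
          eq_of_r_sr ψ (phi k) (by simpa [phiFun_r] using h1)
            (by simpa [phiFun_sr] using h2)
        have hfun : (fun x => ψ x) = phiFun k := funext hphi
        rw [hfun, hS]
        simp only [Set.image_insert_eq, Set.image_singleton, phiFun_r, phiFun_sr, neg_neg,
          sub_zero, sub_self]
        ext x
        simp only [Set.mem_insert_iff, Set.mem_singleton_iff]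
        tauto
  refine ⟨key, ?_⟩
  rw [Nat.card_eq_two_iff]
  have hrefl : (fun x => (MulEquiv.refl (DihedralGroup n)) x) '' S = S :=
    (key _).mpr (Or.inl ⟨rfl, rfl⟩)
  have hphiS : (fun x => (phi k) x) '' S = S :=
    (key (phi k)).mpr (Or.inr ⟨by simp [phiFun_r], by simp [phiFun_sr]⟩)
  refine ⟨⟨MulEquiv.refl _, hrefl⟩, ⟨phi k, hphiS⟩, ?_, ?_⟩
  · intro h
    have h' := congrArg (fun z => z.1 (r 1)) h
    simp only [MulEquiv.refl_apply, phi_apply, phiFun_r, r.injEq] at h'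
    exact hone h'
  · ext ⟨ψ, hψ⟩
    simp only [Set.mem_insert_iff, Set.mem_singleton_iff, Set.mem_univ, iff_true,
      Subtype.mk.injEq]
    rcases (key ψ).mp hψ with ⟨h1, h2⟩ | ⟨h1, h2⟩
    · exact Or.inl (MulEquiv.ext (eq_of_r_sr ψ (MulEquiv.refl _) (by simpa using h1)
        (by simpa using h2)))
    · exact Or.inr (MulEquiv.ext (eq_of_r_sr ψ (phi k) (by simpa [phiFun_r] using h1)
        (by simpa [phiFun_sr] using h2)))
end
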